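/- arXiv:2209.01447 — 4 statements merged into one kernel-verified Lean document; each statement's English description precedes it below -/
import Mathlib

section
/- Let p be a prime and a, b integers. The set of points {(x, ((x−a)² + b) mod p) : x ∈ [0, p−1]} ⊆ ℤ² contains no three collinear points. -/
theorem modular_parabola_general_position (p : ℕ) (hp : p.Prime) (a b : ℤ)
    (x₁ x₂ x₃ : ℤ)
    (h₁ : 0 ≤ x₁) (h₁' : x₁ < p) (h₂ : 0 ≤ x₂) (h₂' : x₂ < p)
    (h₃ : 0 ≤ x₃) (h₃' : x₃ < p)
    (h12 : x₁ ≠ x₂) (h13 : x₁ ≠ x₃) (h23 : x₂ ≠ x₃) :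
    (x₂ - x₁) * (((x₃ - a) ^ 2 + b) % (p : ℤ) - ((x₁ - a) ^ 2 + b) % (p : ℤ)) ≠
      (x₃ - x₁) * (((x₂ - a) ^ 2 + b) % (p : ℤ) - ((x₁ - a) ^ 2 + b) % (p : ℤ)) := by
  intro h
  haveI : Fact p.Prime := ⟨hp⟩
  have key : ∀ u v : ℤ, 0 ≤ u → u < p → 0 ≤ v → v < p → u ≠ v →
      ((u - v : ℤ) : ZMod p) ≠ 0 := by
    intro u v hu hu' hv hv' huv h0
    rw [ZMod.intCast_zmod_eq_zero_iff_dvd] at h0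
    have := Int.eq_zero_of_abs_lt_dvd h0 (abs_lt.mpr ⟨by omega, by omega⟩)
    omega
  have h' := congrArg (fun z : ℤ => (z : ZMod p)) h
  simp only [Int.cast_mul, Int.cast_sub, Int.cast_add, Int.cast_pow,
    ZMod.intCast_mod, Int.cast_natCast] at h'
  have hz : ((x₂ - x₁ : ℤ) : ZMod p) * ((x₃ - x₁ : ℤ) : ZMod p) *
      ((x₃ - x₂ : ℤ) : ZMod p) = 0 := by
    push_cast
    linear_combination h'
  rcases mul_eq_zero.mp hz with hz | hz
  · rcases mul_eq_zero.mp hz with hz | hz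
    · exact key x₂ x₁ h₂ h₂' h₁ h₁' (Ne.symm h12) hz
    · exact key x₃ x₁ h₃ h₃' h₁ h₁' (Ne.symm h13) hz
  · exact key x₃ x₂ h₃ h₃' h₂ h₂' (Ne.symm h23) hz
end

section
/- Let p be a prime, a, b integers, and let P = {(x, ((x−a)²+b) mod p) : x ∈ [0,p−1]}. For any positive rational slope s and positive real t, there is at most one unordered pair {Q₁, Q₂} of distinct points of P such that the segment Q₁Q₂ has slope s and Euclidean length t. -/
theorem modular_parabola_unique_segment (p : ℕ) (hp : p.Prime) (a b : ℤ)
    (s : ℚ) (hs : 0 < s) (t : ℝ) (ht : 0 < t)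
    (Q₁ Q₂ R₁ R₂ : ℤ × ℤ)
    (hQ₁ : ∃ x : ℤ, 0 ≤ x ∧ x < p ∧ Q₁ = (x, ((x - a) ^ 2 + b) % (p : ℤ)))
    (hQ₂ : ∃ x : ℤ, 0 ≤ x ∧ x < p ∧ Q₂ = (x, ((x - a) ^ 2 + b) % (p : ℤ)))
    (hR₁ : ∃ x : ℤ, 0 ≤ x ∧ x < p ∧ R₁ = (x, ((x - a) ^ 2 + b) % (p : ℤ)))
    (hR₂ : ∃ x : ℤ, 0 ≤ x ∧ x < p ∧ R₂ = (x, ((x - a) ^ 2 + b) % (p : ℤ)))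
    (hQlt : Q₁.1 < Q₂.1) (hRlt : R₁.1 < R₂.1)
    (hQs : ((Q₂.2 - Q₁.2 : ℤ) : ℚ) / ((Q₂.1 - Q₁.1 : ℤ) : ℚ) = s)
    (hRs : ((R₂.2 - R₁.2 : ℤ) : ℚ) / ((R₂.1 - R₁.1 : ℤ) : ℚ) = s)
    (hQt : Real.sqrt (((Q₂.1 - Q₁.1) ^ 2 + (Q₂.2 - Q₁.2) ^ 2 : ℤ) : ℝ) = t)
    (hRt : Real.sqrt (((R₂.1 - R₁.1) ^ 2 + (R₂.2 - R₁.2) ^ 2 : ℤ) : ℝ) = t) :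
    Q₁ = R₁ ∧ Q₂ = R₂ := by
  obtain ⟨x₁, hx₁0, hx₁p, rfl⟩ := hQ₁
  obtain ⟨x₂, hx₂0, hx₂p, rfl⟩ := hQ₂
  obtain ⟨u₁, hu₁0, hu₁p, rfl⟩ := hR₁
  obtain ⟨u₂, hu₂0, hu₂p, rfl⟩ := hR₂
  simp only [Prod.fst, Prod.snd] at hQlt hRlt hQs hRs hQt hRt
  set fQ₁ : ℤ := ((x₁ - a) ^ 2 + b) % (p : ℤ) with hfQ₁
  set fQ₂ : ℤ := ((x₂ - a) ^ 2 + b) % (p : ℤ) with hfQ₂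
  set fR₁ : ℤ := ((u₁ - a) ^ 2 + b) % (p : ℤ) with hfR₁
  set fR₂ : ℤ := ((u₂ - a) ^ 2 + b) % (p : ℤ) with hfR₂
  have hQdx : ((x₂ - x₁ : ℤ) : ℚ) ≠ 0 := by
    exact_mod_cast sub_ne_zero.mpr (ne_of_gt hQlt)
  have hRdx : ((u₂ - u₁ : ℤ) : ℚ) ≠ 0 := by
    exact_mod_cast sub_ne_zero.mpr (ne_of_gt hRlt)
  have hQdy : ((fQ₂ - fQ₁ : ℤ) : ℚ) = s * ((x₂ - x₁ : ℤ) : ℚ) := by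
    rw [div_eq_iff hQdx] at hQs; exact hQs
  have hRdy : ((fR₂ - fR₁ : ℤ) : ℚ) = s * ((u₂ - u₁ : ℤ) : ℚ) := by
    rw [div_eq_iff hRdx] at hRs; exact hRs
  have hlen : ((x₂ - x₁) ^ 2 + (fQ₂ - fQ₁) ^ 2 : ℤ) = ((u₂ - u₁) ^ 2 + (fR₂ - fR₁) ^ 2 : ℤ) := by
    have h1 : (0:ℝ) ≤ (((x₂ - x₁) ^ 2 + (fQ₂ - fQ₁) ^ 2 : ℤ) : ℝ) := by positivity
    have h2 : (0:ℝ) ≤ (((u₂ - u₁) ^ 2 + (fR₂ - fR₁) ^ 2 : ℤ) : ℝ) := by positivity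
    have hst := hQt.trans hRt.symm
    have h3 : (((x₂ - x₁) ^ 2 + (fQ₂ - fQ₁) ^ 2 : ℤ) : ℝ)
        = (((u₂ - u₁) ^ 2 + (fR₂ - fR₁) ^ 2 : ℤ) : ℝ) := by
      rw [← Real.sq_sqrt h1, ← Real.sq_sqrt h2, hst]
    exact_mod_cast h3
  have hdx : x₂ - x₁ = u₂ - u₁ := by
    have hcast : ((x₂:ℚ) - x₁) ^ 2 + ((fQ₂:ℚ) - fQ₁) ^ 2
        = ((u₂:ℚ) - u₁) ^ 2 + ((fR₂:ℚ) - fR₁) ^ 2 := by exact_mod_cast hlen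
    have hQdy' : ((fQ₂:ℚ) - fQ₁) = s * ((x₂:ℚ) - x₁) := by push_cast at hQdy; exact hQdy
    have hRdy' : ((fR₂:ℚ) - fR₁) = s * ((u₂:ℚ) - u₁) := by push_cast at hRdy; exact hRdy
    have key : ((x₂:ℚ) - x₁) ^ 2 * (1 + s ^ 2) = ((u₂:ℚ) - u₁) ^ 2 * (1 + s ^ 2) := by
      linear_combination hcast - (((fQ₂:ℚ) - fQ₁) + s * ((x₂:ℚ) - x₁)) * hQdy'
        + (((fR₂:ℚ) - fR₁) + s * ((u₂:ℚ) - u₁)) * hRdy'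
    have hs2 : (1 + s ^ 2 : ℚ) ≠ 0 := by positivity
    have hsq : ((x₂:ℚ) - x₁) ^ 2 = ((u₂:ℚ) - u₁) ^ 2 := mul_right_cancel₀ hs2 key
    have hsqz : (x₂ - x₁) ^ 2 = (u₂ - u₁) ^ 2 := by exact_mod_cast hsq
    nlinarith [hsqz, hQlt, hRlt]
  have hdy : fQ₂ - fQ₁ = fR₂ - fR₁ := by
    have : ((fQ₂ - fQ₁ : ℤ) : ℚ) = ((fR₂ - fR₁ : ℤ) : ℚ) := by
      rw [hQdy, hRdy, hdx]
    exact_mod_cast this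
  -- mod-p argument
  have hppos : (0:ℤ) < p := by exact_mod_cast hp.pos
  have hmod : ((p : ℤ)) ∣ 2 * (x₂ - x₁) * (x₁ - u₁) := by
    have h1 : (fQ₂ - fQ₁) % (p : ℤ) = ((x₂ - a) ^ 2 - (x₁ - a) ^ 2) % (p : ℤ) := by
      rw [hfQ₂, hfQ₁, ← Int.sub_emod]; congr 1; ring
    have h2 : (fR₂ - fR₁) % (p : ℤ) = ((u₂ - a) ^ 2 - (u₁ - a) ^ 2) % (p : ℤ) := by
      rw [hfR₂, hfR₁, ← Int.sub_emod]; congr 1; ring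
    have h3 : ((x₂ - a) ^ 2 - (x₁ - a) ^ 2) % (p : ℤ) = ((u₂ - a) ^ 2 - (u₁ - a) ^ 2) % (p : ℤ) := by
      rw [← h1, ← h2, hdy]
    have h4 : ((p:ℤ)) ∣ ((u₂ - a) ^ 2 - (u₁ - a) ^ 2) - ((x₂ - a) ^ 2 - (x₁ - a) ^ 2) :=
      Int.ModEq.dvd (h3 : Int.ModEq (p:ℤ) _ _)
    have heq : ((u₂ - a) ^ 2 - (u₁ - a) ^ 2) - ((x₂ - a) ^ 2 - (x₁ - a) ^ 2)
        = 2 * (x₂ - x₁) * (u₁ - x₁) := by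
      have hu : u₂ = u₁ + (x₂ - x₁) := by omega
      subst hu; ring
    rw [heq] at h4
    have := dvd_neg.mpr h4
    rw [show -(2 * (x₂ - x₁) * (u₁ - x₁)) = 2 * (x₂ - x₁) * (x₁ - u₁) by ring] at this
    exact this
  have hppz : Prime (p : ℤ) := Nat.prime_iff_prime_int.mp hp
  have hx₁u₁ : x₁ = u₁ := by
    rcases hppz.dvd_mul.mp hmod with h | h
    · rcases hppz.dvd_mul.mp h with h' | h'
      · have hp2 : p ≤ 2 := by
          have := Int.le_of_dvd (by norm_num) h'
          exact_mod_cast this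
        have := hp.two_le
        omega
      · exfalso
        have := Int.le_of_dvd (by omega) h'
        omega
    · have habs : |x₁ - u₁| < (p:ℤ) := abs_lt.mpr ⟨by omega, by omega⟩
      have := Int.eq_zero_of_abs_lt_dvd h habs
      omega
  have hx₂u₂ : x₂ = u₂ := by omega
  subst hx₁u₁ hx₂u₂
  exact ⟨rfl, rfl⟩
end

section
/- Let 0 < ε < 1 and c ≥ 12/ε. There exists n₀ such that for all integers n ≥ n₀: 2·((n+1)^ε − n^ε)/(n+1)^ε − (n^ε − (n−1)^ε)/(n−1)^ε ≥ 6/(c n). -/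
/-!
Each term is a relative increment of `t ↦ t ^ ε`, and Bernoulli's inequality
`(1 + h) ^ ε ≤ 1 + ε h` (for `0 ≤ ε ≤ 1`, `h ≥ -1`) bounds it linearly:
`(n + 1) ^ ε - n ^ ε ≥ ε (n + 1) ^ ε / (n + 1)` and `n ^ ε - (n - 1) ^ ε ≤ ε (n - 1) ^ ε / (n - 1)`.
The left-hand side is therefore at least `ε (2 / (n + 1) - 1 / (n - 1)) ≥ ε / (2 n)` once `n ≥ 6`,
and `ε / (2 n) ≥ 6 / (c n)` because `ε c ≥ 12`.
-/

open Real

lemma rpow_sub_rpow_div_rpow_le {a b ε : ℝ} (ha : 0 ≤ a) (hb : 0 < b) (hε0 : 0 ≤ ε)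
    (hε1 : ε ≤ 1) : (a ^ ε - b ^ ε) / b ^ ε ≤ ε * (a - b) / b := by
  have hbε : b ^ ε ≠ 0 := (rpow_pos_of_pos hb ε).ne'
  have hh : -1 ≤ (a - b) / b := by
    rw [le_div_iff₀ hb]
    linarith
  calc (a ^ ε - b ^ ε) / b ^ ε = (1 + (a - b) / b) ^ ε - 1 := by
        rw [sub_div, div_self hbε, ← div_rpow ha hb.le, one_add_div hb.ne', add_sub_cancel]
    _ ≤ 1 + ε * ((a - b) / b) - 1 := by
        gcongr
        exact rpow_one_add_le_one_add_mul_self hh hε0 hε1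
    _ = ε * (a - b) / b := by ring

lemma inv_two_mul_le_two_div_add_one_sub_inv_sub_one {x : ℝ} (hx : 6 ≤ x) :
    (2 * x)⁻¹ ≤ 2 / (x + 1) - (x - 1)⁻¹ := by
  have hsplit : 2 / (x + 1) - (x - 1)⁻¹ = (x - 3) / ((x + 1) * (x - 1)) := by
    have : x + 1 ≠ 0 := by linarith
    have : x - 1 ≠ 0 := by linarith
    field_simp
    ring
  rw [hsplit, inv_eq_one_div, div_le_div_iff₀ (by positivity) (by nlinarith)]
  nlinarith

lemma inv_two_mul_le_relative_second_difference {ε x : ℝ} (hε0 : 0 ≤ ε) (hε1 : ε ≤ 1)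
    (hx : 6 ≤ x) :
    ε / (2 * x) ≤
      2 * ((x + 1) ^ ε - x ^ ε) / (x + 1) ^ ε - (x ^ ε - (x - 1) ^ ε) / (x - 1) ^ ε := by
  have hforward : ε / (x + 1) ≤ ((x + 1) ^ ε - x ^ ε) / (x + 1) ^ ε := by
    have := rpow_sub_rpow_div_rpow_le (a := x) (b := x + 1) (by linarith) (by linarith) hε0 hε1
    rw [← neg_sub, neg_div] at this
    have hrhs : ε * (x - (x + 1)) / (x + 1) = -(ε / (x + 1)) := by ring
    linarith
  have hbackward : (x ^ ε - (x - 1) ^ ε) / (x - 1) ^ ε ≤ ε / (x - 1) := by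
    have := rpow_sub_rpow_div_rpow_le (a := x) (b := x - 1) (by linarith) (by linarith) hε0 hε1
    rwa [sub_sub_cancel, mul_one] at this
  rw [mul_div_assoc]
  calc ε / (2 * x) = ε * (2 * x)⁻¹ := div_eq_mul_inv _ _
    _ ≤ ε * (2 / (x + 1) - (x - 1)⁻¹) :=
        mul_le_mul_of_nonneg_left (inv_two_mul_le_two_div_add_one_sub_inv_sub_one hx) hε0
    _ = 2 * (ε / (x + 1)) - ε / (x - 1) := by ring
    _ ≤ _ := by linarith

theorem key_concavity_estimate (ε c : ℝ) (hε0 : 0 < ε) (hε1 : ε < 1)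
    (hc : 12 / ε ≤ c) :
    ∃ n₀ : ℕ, ∀ n : ℕ, n₀ ≤ n →
      6 / (c * n) ≤
        2 * (((n : ℝ) + 1) ^ ε - (n : ℝ) ^ ε) / ((n : ℝ) + 1) ^ ε -
          ((n : ℝ) ^ ε - ((n : ℝ) - 1) ^ ε) / ((n : ℝ) - 1) ^ ε := by
  refine ⟨6, fun n hn => ?_⟩
  have hx : (6 : ℝ) ≤ n := by exact_mod_cast hn
  have hεc : 12 ≤ ε * c := by rwa [div_le_iff₀' hε0] at hc
  have hconst : 6 / (c * n) ≤ ε / (2 * n) := by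
    rw [div_le_div_iff₀ (by nlinarith) (by positivity)]
    nlinarith
  exact hconst.trans (inv_two_mul_le_relative_second_difference hε0.le hε1.le hx)
end

section
/- Let p be a prime, and consider the modular parabola P = {(x, x² mod p) : x ∈ [0,p−1]} ⊆ ℤ². Then |P| = p, and P is contained in the grid [0,p−1]² and contains no three collinear points. -/
lemma ZModFactor (p : ℕ) (hp : p.Prime) (a b c : ℤ)
    (h : (((b - a) * (c ^ 2 % (p:ℤ) - a ^ 2 % (p:ℤ)) : ℤ) : ZMod p) = (((c - a) * (b ^ 2 % (p:ℤ) - a ^ 2 % (p:ℤ)) : ℤ) : ZMod p)) :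
    ((b - a : ℤ) : ZMod p) = 0 ∨ ((c - a : ℤ) : ZMod p) = 0 ∨ ((c - b : ℤ) : ZMod p) = 0 := by
  haveI := Fact.mk hp
  have hb : ((b ^ 2 % (p:ℤ) : ℤ) : ZMod p) = ((b : ZMod p)) ^ 2 := by
    push_cast [ZMod.intCast_mod]; ring
  have hc : ((c ^ 2 % (p:ℤ) : ℤ) : ZMod p) = ((c : ZMod p)) ^ 2 := by
    push_cast [ZMod.intCast_mod]; ring
  have ha : ((a ^ 2 % (p:ℤ) : ℤ) : ZMod p) = ((a : ZMod p)) ^ 2 := by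
    push_cast [ZMod.intCast_mod]; ring
  have key : (((b - a : ℤ) : ZMod p)) * ((c - a : ℤ)) * ((c - b : ℤ)) = 0 := by
    push_cast at h ⊢
    linear_combination h
  rcases mul_eq_zero.mp key with h1 | h3
  · rcases mul_eq_zero.mp h1 with h1 | h2
    · exact Or.inl h1
    · exact Or.inr (Or.inl h2)
  · exact Or.inr (Or.inr h3)

theorem modular_parabola_properties (p : ℕ) (hp : p.Prime) :
    Set.ncard {Q : ℤ × ℤ | ∃ x : ℤ, 0 ≤ x ∧ x < (p : ℤ) ∧ Q = (x, x ^ 2 % (p : ℤ))} = p ∧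
    (∀ Q : ℤ × ℤ, (∃ x : ℤ, 0 ≤ x ∧ x < (p : ℤ) ∧ Q = (x, x ^ 2 % (p : ℤ))) →
      0 ≤ Q.1 ∧ Q.1 ≤ (p : ℤ) - 1 ∧ 0 ≤ Q.2 ∧ Q.2 ≤ (p : ℤ) - 1) ∧
    (∀ P₁ P₂ P₃ : ℤ × ℤ,
      (∃ x : ℤ, 0 ≤ x ∧ x < (p : ℤ) ∧ P₁ = (x, x ^ 2 % (p : ℤ))) →
      (∃ x : ℤ, 0 ≤ x ∧ x < (p : ℤ) ∧ P₂ = (x, x ^ 2 % (p : ℤ))) →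
      (∃ x : ℤ, 0 ≤ x ∧ x < (p : ℤ) ∧ P₃ = (x, x ^ 2 % (p : ℤ))) →
      P₁ ≠ P₂ → P₁ ≠ P₃ → P₂ ≠ P₃ →
      ¬ Collinear ℝ ({((P₁.1 : ℝ), (P₁.2 : ℝ)), ((P₂.1 : ℝ), (P₂.2 : ℝ)),
          ((P₃.1 : ℝ), (P₃.2 : ℝ))} : Set (ℝ × ℝ))) := by
  have hp0 : (0:ℤ) < (p:ℤ) := by exact_mod_cast hp.pos
  refine ⟨?_, ?_, ?_⟩
  · -- cardinality
    have hset : {Q : ℤ × ℤ | ∃ x : ℤ, 0 ≤ x ∧ x < (p : ℤ) ∧ Q = (x, x ^ 2 % (p : ℤ))}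
        = (fun x : ℤ => (x, x ^ 2 % (p:ℤ))) '' (Set.Ico 0 (p:ℤ)) := by
      ext Q
      simp only [Set.mem_setOf_eq, Set.mem_image, Set.mem_Ico]
      constructor
      · rintro ⟨x, h1, h2, h3⟩; exact ⟨x, ⟨h1, h2⟩, h3.symm⟩
      · rintro ⟨x, ⟨h1, h2⟩, h3⟩; exact ⟨x, h1, h2, h3.symm⟩
    rw [hset, Set.ncard_image_of_injective _ (fun a b h => (Prod.mk.injEq _ _ _ _).mp h |>.1)]
    rw [← Finset.coe_Ico, Set.ncard_coe_finset, Int.card_Ico]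
    simp
  · rintro Q ⟨x, h1, h2, rfl⟩
    refine ⟨h1, by omega, Int.emod_nonneg _ (by omega), ?_⟩
    have := Int.emod_lt_of_pos (x^2) hp0
    omega
  · rintro P₁ P₂ P₃ ⟨a, ha0, hap, rfl⟩ ⟨b, hb0, hbp, rfl⟩ ⟨c, hc0, hcp, rfl⟩ h12 h13 h23 hcol
    -- distinct x-coordinates
    have hab : a ≠ b := fun h => h12 (by rw [h])
    have hac : a ≠ c := fun h => h13 (by rw [h])
    have hbc : b ≠ c := fun h => h23 (by rw [h])
    -- extract determinant = 0 over ℝ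
    have h1 : ((a:ℝ), ((a^2 % (p:ℤ) : ℤ) : ℝ)) ∈ ({((a:ℝ), ((a^2 % (p:ℤ):ℤ):ℝ)), ((b:ℝ), ((b^2 % (p:ℤ):ℤ):ℝ)), ((c:ℝ), ((c^2 % (p:ℤ):ℤ):ℝ))} : Set (ℝ × ℝ)) := by left; rfl
    rw [collinear_iff_of_mem h1] at hcol
    obtain ⟨v, hv⟩ := hcol
    obtain ⟨rb, hrb⟩ := hv _ (by right; left; rfl)
    obtain ⟨rc, hrc⟩ := hv _ (by right; right; rfl)
    have hdet : ((b:ℝ) - a) * (((c^2 % (p:ℤ):ℤ):ℝ) - ((a^2 % (p:ℤ):ℤ):ℝ))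
        = ((c:ℝ) - a) * (((b^2 % (p:ℤ):ℤ):ℝ) - ((a^2 % (p:ℤ):ℤ):ℝ)) := by
      have hb1 : (b:ℝ) = rb * v.1 + a := congrArg Prod.fst hrb
      have hb2 : ((b^2 % (p:ℤ):ℤ):ℝ) = rb * v.2 + ((a^2 % (p:ℤ):ℤ):ℝ) := congrArg Prod.snd hrb
      have hc1 : (c:ℝ) = rc * v.1 + a := congrArg Prod.fst hrc
      have hc2 : ((c^2 % (p:ℤ):ℤ):ℝ) = rc * v.2 + ((a^2 % (p:ℤ):ℤ):ℝ) := congrArg Prod.snd hrc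
      rw [hb1, hb2, hc1, hc2]; ring
    have hdetZ : (b - a) * (c^2 % (p:ℤ) - a^2 % (p:ℤ)) = (c - a) * (b^2 % (p:ℤ) - a^2 % (p:ℤ)) := by
      exact_mod_cast hdet
    have hz : ((b - a : ℤ) : ZMod p) = 0 ∨ ((c - a : ℤ) : ZMod p) = 0 ∨ ((c - b : ℤ) : ZMod p) = 0 := by
      apply ZModFactor p hp
      exact_mod_cast congrArg (fun n : ℤ => (n : ZMod p)) hdetZ
    have small : ∀ x y : ℤ, 0 ≤ x → x < p → 0 ≤ y → y < p → x ≠ y → ¬ ((y - x : ℤ) : ZMod p) = 0 := by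
      intro x y hx hxp hy hyp hxy h
      rw [ZMod.intCast_zmod_eq_zero_iff_dvd] at h
      have := Int.eq_zero_of_abs_lt_dvd h (abs_lt.mpr ⟨by omega, by omega⟩)
      omega
    rcases hz with h | h | h
    · exact small a b ha0 hap hb0 hbp hab h
    · exact small a c ha0 hap hc0 hcp hac h
    · exact small b c hb0 hbp hc0 hcp hbc h
end
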